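/- The Value of Unilateral Altruism of user 1 in the two-user routing game on the load-balancing network is arbitrarily large: for every r > 0, L > 0 and every M > 0, there exist δ, c with 0 < δ < L < c and cδ < rL, and β ∈ (1/2, 1], such that (r, r − δ) is a Nash equilibrium of the altruistic game (user 1 minimizing Ĵ₁ = (1 − β)J₁ + βJ₂, user 2 minimizing J₂), (r/2 + ζ, r/2 + ζ) with ζ = cδ/(2L) is a Nash equilibrium of the selfish game, and J₁(r/2 + ζ, r/2 + ζ) > M · J₁(r, r − δ). -/

import Mathlib

/-!
Take `β = 1`, so that user 1 minimises `J₂`, and make the cross link expensive while keeping `cδ`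
small: `c = 8L(M + 1) + r` and `δ = rL / (2c)`, whence `ζ = r/4`. At `(r, r - δ)` user 1 sends
everything locally, loading `l₁` with `r + δ` and paying only `2rL`. In the selfish equilibrium
both links carry `r`, and user 1 still pays `c` on each of his `r/4` cross-routed units, so his cost
exceeds `rc/4 > 2MrL`. The equilibrium inequalities all follow from the affine minorant
`L/δ (x - r) + L ≤ T x`, which is exact on `[r - δ, ∞)`, and from `0 ≤ T`: with them each
deviation cost is bounded below by a quadratic whose minimum on `[0, r]` is the equilibrium cost.
-/

/-- Elbow latency function with parameters `r, L, δ`. -/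
noncomputable def T (r L δ x : ℝ) : ℝ := max 0 (L / δ * (x - r) + L)

/-- Cost of user 1 in the two-user load-balancing game. -/
noncomputable def J₁ (r L δ c x₁ x₂ : ℝ) : ℝ :=
  x₁ * T r L δ (x₁ + (r - x₂)) + (r - x₁) * (c + T r L δ (x₂ + (r - x₁)))

/-- Cost of user 2 in the two-user load-balancing game. -/
noncomputable def J₂ (r L δ c x₁ x₂ : ℝ) : ℝ :=
  x₂ * T r L δ (x₂ + (r - x₁)) + (r - x₂) * (c + T r L δ (x₁ + (r - x₂)))

/-- Perceived cost of the unilaterally altruistic user 1 with degree of cooperation `β`. -/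
noncomputable def Jhat₁ (r L δ c β x₁ x₂ : ℝ) : ℝ :=
  (1 - β) * J₁ r L δ c x₁ x₂ + β * J₂ r L δ c x₁ x₂

section Latency

variable {r L δ : ℝ}

theorem affine_le_T (x : ℝ) : L / δ * (x - r) + L ≤ T r L δ x := le_max_right _ _

theorem T_of_sub_le (hδ : 0 < δ) (hL : 0 ≤ L) {x : ℝ} (hx : r - δ ≤ x) :
    T r L δ x = L / δ * (x - r) + L := by
  have : L / δ * (x - r) + L = L / δ * (x - (r - δ)) := by field_simp; ring
  rw [T, max_eq_right (by rw [this]; exact mul_nonneg (div_nonneg hL hδ.le) (by linarith))]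

theorem T_self (hL : 0 ≤ L) : T r L δ r = L := by
  simp [T, hL]

theorem T_sub_self (hδ : δ ≠ 0) : T r L δ (r - δ) = 0 := by
  simp [T, hδ]

theorem T_add_self (hδ : δ ≠ 0) (hL : 0 ≤ L) : T r L δ (r + δ) = 2 * L := by
  rw [T, add_sub_cancel_left, div_mul_cancel₀ _ hδ, max_eq_right (by linarith)]
  ring

end Latency

section Game

variable {r L δ c : ℝ}

theorem J₂_eq_J₁_swap (x₁ x₂ : ℝ) : J₂ r L δ c x₁ x₂ = J₁ r L δ c x₂ x₁ := rfl

theorem Jhat₁_one (x₁ x₂ : ℝ) : Jhat₁ r L δ c 1 x₁ x₂ = J₂ r L δ c x₁ x₂ := by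
  simp [Jhat₁]

theorem J₁_diag_selfish (hL : 0 ≤ L) (y : ℝ) : J₁ r L δ c y y = r * L + (r - y) * c := by
  rw [J₁, add_sub_cancel, T_self hL]
  ring

theorem J₁_altruistic (hδ : δ ≠ 0) (hL : 0 ≤ L) : J₁ r L δ c r (r - δ) = 2 * r * L := by
  rw [J₁, sub_sub_cancel, T_add_self hδ hL]
  ring

/-- Replacing `T` by its affine minorant makes `x ↦ J₁ x y` a convex quadratic, and `ζ` is exactly
the shift that puts its vertex at `x = y`. -/
theorem selfish_best_response (hδ : 0 < δ) (hL : 0 < L) {x : ℝ} (hx : x ∈ Set.Icc 0 r) :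
    J₁ r L δ c (r / 2 + c * δ / (2 * L)) (r / 2 + c * δ / (2 * L)) ≤
      J₁ r L δ c x (r / 2 + c * δ / (2 * L)) := by
  set y := r / 2 + c * δ / (2 * L)
  have hslope : L / δ * (2 * y - r) = c := by simp only [y]; field_simp; ring
  clear_value y
  calc J₁ r L δ c y y = r * L + (r - y) * c := J₁_diag_selfish hL.le y
    _ ≤ r * L + (r - y) * c + 2 * (L / δ) * (x - y) ^ 2 :=
        le_add_of_nonneg_right (by positivity)
    _ = x * (L / δ * (x + (r - y) - r) + L) + (r - x) * (c + (L / δ * (y + (r - x) - r) + L)) := by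
        linear_combination (y - x) * hslope
    _ ≤ J₁ r L δ c x y := by
        rw [J₁]
        gcongr
        · exact hx.1
        · exact affine_le_T _
        · linarith [hx.2]
        · exact affine_le_T _

theorem altruistic_best_response₁ (hδ : 0 < δ) (hL : 0 ≤ L) (hδr : 2 * δ ≤ r) {x : ℝ}
    (hx : x ≤ r) : J₂ r L δ c r (r - δ) ≤ J₂ r L δ c x (r - δ) := by
  rw [J₂, J₂, sub_sub_cancel, sub_self, add_zero, T_sub_self hδ.ne',
    T_add_self hδ.ne' hL, T_of_sub_le hδ hL (x := r - δ + (r - x)) (by linarith)]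
  have hT := affine_le_T (r := r) (L := L) (δ := δ) (x + δ)
  have hLδ : L / δ * δ = L := div_mul_cancel₀ L hδ.ne'
  have : 0 ≤ L / δ * (r - x) * (r - 2 * δ) := by
    have := sub_nonneg.2 hx; have := sub_nonneg.2 hδr; positivity
  linear_combination δ * hT + this + (r - 2 * δ) * hLδ

theorem altruistic_best_response₂ (hδ : 0 < δ) (hL : 0 ≤ L) (hc : 0 ≤ c)
    (hregime : c * δ + 4 * L * δ ≤ r * L) {x : ℝ} (hx : x ∈ Set.Icc 0 r) :
    J₂ r L δ c r (r - δ) ≤ J₂ r L δ c r x := by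
  obtain ⟨hx0, hxr⟩ := hx
  have hLδ : L / δ * δ = L := div_mul_cancel₀ L hδ.ne'
  rw [J₂, J₂, sub_sub_cancel, sub_self, add_zero, add_zero, T_sub_self hδ.ne',
    T_add_self hδ.ne' hL, T_of_sub_le hδ hL (x := r + (r - x)) (by linarith)]
  rcases le_total x (r - δ) with hlow | hhigh
  · have hT : 0 ≤ x * T r L δ x := mul_nonneg hx0 (le_max_left _ _)
    have : 0 ≤ (r - x - δ) * (c + L + L / δ * (r - x + δ)) := by
      have := sub_nonneg.2 hlow
      apply mul_nonneg <;> [linarith; positivity]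
    linear_combination hT + this - δ * hLδ
  · rw [T_of_sub_le hδ hL hhigh]
    have hslope : c + 4 * L ≤ L / δ * r := by
      rw [div_mul_eq_mul_div, le_div_iff₀ hδ]; linarith
    have : 0 ≤ (δ - (r - x)) * (L / δ * r - c - 2 * (L / δ) * (r - x + δ)) := by
      apply mul_nonneg <;> nlinarith
    linear_combination this + (r - 2 * δ) * hLδ

end Game

theorem exists_parameters_of_gap {r L M : ℝ} (hr : 0 < r) (hL : 0 < L) (hM : 0 < M) :
    ∃ δ c : ℝ, 0 < δ ∧ δ < L ∧ L < c ∧ c * δ < r * L ∧ c * δ + 4 * L * δ ≤ r * L ∧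
      2 * δ ≤ r ∧ M * (2 * r * L) < r * L + (r - (r / 2 + c * δ / (2 * L))) * c := by
  set c := 8 * L * (M + 1) + r with hc_def
  have hLc : 8 * L < c := by nlinarith
  have hrc : r < c := by nlinarith
  set δ := r * L / (2 * c)
  have hδ : 0 < δ := by positivity
  have hcδ : c * δ = r * L / 2 := by
    have : c ≠ 0 := by linarith
    simp only [δ]; field_simp
  have hδr : 16 * δ < r := by nlinarith
  have hζ : c * δ / (2 * L) = r / 4 := by rw [hcδ]; field_simp; ring
  refine ⟨δ, c, hδ, by nlinarith, by linarith, by nlinarith, by nlinarith, by linarith, ?_⟩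
  rw [hζ]
  nlinarith [mul_pos hr hL]

theorem value_of_unilateral_altruism_unbounded
    (r L : ℝ) (hr : 0 < r) (hL : 0 < L) (M : ℝ) (hM : 0 < M) :
    ∃ δ c β : ℝ, 0 < δ ∧ δ < L ∧ L < c ∧ c * δ < r * L ∧ β ∈ Set.Ioc (1 / 2 : ℝ) 1 ∧
      -- (r, r - δ) is a Nash equilibrium of the altruistic game
      (∀ x₁ ∈ Set.Icc (0 : ℝ) r,
        Jhat₁ r L δ c β r (r - δ) ≤ Jhat₁ r L δ c β x₁ (r - δ)) ∧
      (∀ x₂ ∈ Set.Icc (0 : ℝ) r, J₂ r L δ c r (r - δ) ≤ J₂ r L δ c r x₂) ∧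
      -- (r/2 + ζ, r/2 + ζ) is a Nash equilibrium of the selfish game
      (∀ x₁ ∈ Set.Icc (0 : ℝ) r,
        J₁ r L δ c (r / 2 + c * δ / (2 * L)) (r / 2 + c * δ / (2 * L)) ≤
          J₁ r L δ c x₁ (r / 2 + c * δ / (2 * L))) ∧
      (∀ x₂ ∈ Set.Icc (0 : ℝ) r,
        J₂ r L δ c (r / 2 + c * δ / (2 * L)) (r / 2 + c * δ / (2 * L)) ≤
          J₂ r L δ c (r / 2 + c * δ / (2 * L)) x₂) ∧
      -- VoU of user 1 exceeds M
      J₁ r L δ c (r / 2 + c * δ / (2 * L)) (r / 2 + c * δ / (2 * L)) >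
        M * J₁ r L δ c r (r - δ) := by
  obtain ⟨δ, c, hδ, hδL, hLc, hcδ, hregime, hδr, hgap⟩ := exists_parameters_of_gap hr hL hM
  refine ⟨δ, c, 1, hδ, hδL, hLc, hcδ, ⟨by norm_num, le_rfl⟩, fun x hx => ?_,
    fun x hx => altruistic_best_response₂ hδ hL.le (by linarith) hregime hx,
    fun x hx => selfish_best_response hδ hL hx, fun x hx => ?_, ?_⟩
  · rw [Jhat₁_one, Jhat₁_one]
    exact altruistic_best_response₁ hδ hL.le hδr hx.2
  · simpa only [J₂_eq_J₁_swap] using selfish_best_response hδ hL hx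
  · rw [J₁_diag_selfish hL.le, J₁_altruistic hδ.ne' hL.le]
    exact hgap
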